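/- Let n ≥ 4, R > 0, and let p_k = (R cos(2πk/n), R sin(2πk/n)) for k = 0, …, n−1 be n equidistant points on the circle of radius R centered at the origin in ℝ². For every ε with R·sin(π/n) ≤ ε < R·sin(2π/n), the union ⋃_{k} closedBall(p_k, ε), with the subspace topology, is homotopy equivalent to the circle {x ∈ ℝ² : ‖x‖ = R}. -/

import Mathlib

open Metric Real

/-- `n` equidistant points on the circle of radius `R` centered at the origin in ℝ². -/
noncomputable def circPoint (n : ℕ) (R : ℝ) (k : Fin n) : EuclideanSpace ℝ (Fin 2) :=
  WithLp.toLp 2 ![R * Real.cos (2 * π * k / n), R * Real.sin (2 * π * k / n)]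

lemma angle_close (n : ℕ) (hn : 0 < n) (θ : ℝ) :
    ∃ j : Fin n, Real.cos (π / n) ≤ Real.cos (θ - 2 * π * j / n) := by
  have hπ := Real.pi_pos
  have hn' : (0:ℝ) < n := by exact_mod_cast hn
  set m : ℤ := round (n * θ / (2 * π)) with hm
  have h1 : |n * θ / (2 * π) - m| ≤ 1 / 2 := abs_sub_round _
  have hd : |θ - 2 * π * m / n| ≤ π / n := by
    have h2 : |θ - 2 * π * m / n| = (2 * π / n) * |n * θ / (2 * π) - m| := by
      rw [← abs_of_pos (show (0:ℝ) < 2 * π / n by positivity), ← abs_mul]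
      congr 1
      field_simp
    rw [h2]
    calc (2 * π / n) * |n * θ / (2 * π) - m| ≤ (2 * π / n) * (1/2) := by
          apply mul_le_mul_of_nonneg_left h1 (by positivity)
      _ = π / n := by ring
  have hmod : 0 ≤ m % n ∧ m % n < n := ⟨Int.emod_nonneg m (by positivity), Int.emod_lt_of_pos m (by exact_mod_cast hn)⟩
  refine ⟨⟨(m % n).toNat, by omega⟩, ?_⟩
  have hj : ((⟨(m % n).toNat, by omega⟩ : Fin n) : ℝ) = ((m % n : ℤ) : ℝ) := by
    have := Int.toNat_of_nonneg hmod.1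
    simp only [Fin.val_mk]
    exact_mod_cast congrArg (Int.cast : ℤ → ℝ) this
  rw [hj]
  have hq : (m : ℝ) = n * (m / n : ℤ) + ((m % n : ℤ) : ℝ) := by
    have := Int.mul_ediv_add_emod m n
    exact_mod_cast congrArg (Int.cast : ℤ → ℝ) this.symm
  have : θ - 2 * π * ((m % n : ℤ) : ℝ) / n = (θ - 2 * π * m / n) + (m / n : ℤ) * (2 * π) := by
    field_simp
    nlinarith [hq]
  rw [this, Real.cos_add_int_mul_two_pi]
  rw [← Real.cos_abs (θ - 2 * π * m / n)]
  exact Real.cos_le_cos_of_nonneg_of_le_pi (abs_nonneg _)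
    (by
      have h1n : (1:ℝ) ≤ n := by exact_mod_cast hn
      rw [div_le_iff₀ hn']; nlinarith) hd

lemma norm_circPoint (n : ℕ) (R : ℝ) (hR : 0 ≤ R) (k : Fin n) : ‖circPoint n R k‖ = R := by
  rw [EuclideanSpace.norm_eq]
  simp only [circPoint, Fin.sum_univ_two, Matrix.cons_val_zero, Matrix.cons_val_one, Matrix.head_cons,
    Real.norm_eq_abs, sq_abs]
  rw [show (R * Real.cos (2 * π * k / n))^2 + (R * Real.sin (2 * π * k / n))^2 = R^2 by
    nlinarith [Real.sin_sq_add_cos_sq (2 * π * k / n)]]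
  exact Real.sqrt_sq hR

lemma inner_circPoint (n : ℕ) (R : ℝ) (k : Fin n) (y : EuclideanSpace ℝ (Fin 2)) :
    (inner ℝ y (circPoint n R k) : ℝ) =
      R * (y 0 * Real.cos (2 * π * k / n) + y 1 * Real.sin (2 * π * k / n)) := by
  rw [PiLp.inner_apply]
  simp only [circPoint, Fin.sum_univ_two, Matrix.cons_val_zero, Matrix.cons_val_one,
    Matrix.head_cons, RCLike.inner_apply, conj_trivial]
  ring

lemma key (n : ℕ) (hn : 0 < n) (R : ℝ) (hR : 0 ≤ R) (y : EuclideanSpace ℝ (Fin 2)) (hy : y ≠ 0) :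
    ∃ j : Fin n, ‖y‖ * (R * Real.cos (π / n)) ≤ (inner ℝ y (circPoint n R j) : ℝ) := by
  set a := y 0
  set b := y 1
  set z : ℂ := ⟨a, b⟩ with hz
  have hz0 : z ≠ 0 := by
    intro h
    apply hy
    have h' : a = 0 ∧ b = 0 := by
      rw [hz, Complex.ext_iff] at h; simpa using h
    ext i
    fin_cases i <;> simp only [Pi.zero_apply] <;> first | exact h'.1 | exact h'.2
  have habs : ‖z‖ = ‖y‖ := by
    rw [Complex.norm_def, Complex.normSq_mk, EuclideanSpace.norm_eq]
    simp [Fin.sum_univ_two, Real.norm_eq_abs, sq_abs, sq]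
    rfl
  have hcos : Real.cos z.arg = a / ‖y‖ := by rw [Complex.cos_arg hz0, habs]
  have hsin : Real.sin z.arg = b / ‖y‖ := by rw [Complex.sin_arg, habs]
  have hny : (0:ℝ) < ‖y‖ := norm_pos_iff.mpr hy
  have ha' : a = ‖y‖ * Real.cos z.arg := by rw [hcos]; field_simp
  have hb' : b = ‖y‖ * Real.sin z.arg := by rw [hsin]; field_simp
  obtain ⟨j, hj⟩ := angle_close n hn z.arg
  refine ⟨j, ?_⟩
  rw [inner_circPoint]
  rw [show y 0 = a from rfl, show y 1 = b from rfl, ha', hb']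
  have : ‖y‖ * Real.cos z.arg * Real.cos (2 * π * j / n) +
      ‖y‖ * Real.sin z.arg * Real.sin (2 * π * j / n) = ‖y‖ * Real.cos (z.arg - 2 * π * j / n) := by
    rw [Real.cos_sub]; ring
  rw [this]
  have := mul_le_mul_of_nonneg_left hj (le_of_lt hny)
  nlinarith

lemma quad_bound (b R ε r₀ ρ s : ℝ)
    (h1 : r₀^2 - 2*r₀*b + R^2 ≤ ε^2) (h2 : ρ^2 - 2*ρ*b + R^2 ≤ ε^2)
    (hs1 : min r₀ ρ ≤ s) (hs2 : s ≤ max r₀ ρ) :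
    s^2 - 2*s*b + R^2 ≤ ε^2 := by
  rcases le_total r₀ ρ with h | h
  · rw [min_eq_left h] at hs1; rw [max_eq_right h] at hs2
    rcases le_total (s + ρ - 2*b) 0 with h3 | h3
    · nlinarith
    · nlinarith
  · rw [min_eq_right h] at hs1; rw [max_eq_left h] at hs2
    rcases le_total (s + r₀ - 2*b) 0 with h3 | h3
    · nlinarith
    · nlinarith

lemma le_of_sq_le_sq' (a b : ℝ) (ha : 0 ≤ a) (hb : 0 ≤ b) (h : a^2 ≤ b^2) : a ≤ b := by nlinarith

section Main

variable (n : ℕ) (R ε : ℝ)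

lemma eps_pos (hn : 4 ≤ n) (hR : 0 < R) (hε₁ : R * Real.sin (π / n) ≤ ε) : 0 < ε := by
  have hπ := Real.pi_pos
  have hn' : (0:ℝ) < n := by positivity
  have : 0 < Real.sin (π / n) := Real.sin_pos_of_pos_of_lt_pi (by positivity)
    (by rw [div_lt_iff₀ hn']; nlinarith [show (4:ℝ) ≤ n by exact_mod_cast hn])
  nlinarith

lemma eps_lt_R (hR : 0 < R) (hε₂ : ε < R * Real.sin (2 * π / n)) : ε < R := by
  have := Real.sin_le_one (2 * π / n)
  nlinarith

lemma cos_pos_n (hn : 4 ≤ n) : 0 < Real.cos (π / n) := by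
  have hπ := Real.pi_pos
  have hn' : (0:ℝ) < n := by positivity
  apply Real.cos_pos_of_mem_Ioo
  constructor
  · have : (0:ℝ) < π / n := by positivity
    linarith
  · have hn' : (0:ℝ) < n := by positivity
    rw [div_lt_iff₀ hn']
    have h4 : (4:ℝ) ≤ n := by exact_mod_cast hn
    nlinarith [Real.pi_pos]

-- R² - r₀² ≤ ε²
lemma gap_bound (hn : 4 ≤ n) (hR : 0 < R) (hε₁ : R * Real.sin (π / n) ≤ ε) :
    R^2 - (R * Real.cos (π / n))^2 ≤ ε^2 := by
  have h := Real.sin_sq_add_cos_sq (π / n)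
  have hs : 0 ≤ Real.sin (π / n) := by
    have hπ := Real.pi_pos
    have hn' : (0:ℝ) < n := by positivity
    exact le_of_lt (Real.sin_pos_of_pos_of_lt_pi (by positivity)
      (by rw [div_lt_iff₀ hn']; nlinarith [show (4:ℝ) ≤ n by exact_mod_cast hn]))
  have h2 : (R * Real.sin (π / n))^2 ≤ ε^2 := by
    have := mul_self_le_mul_self (mul_nonneg hR.le hs) hε₁
    nlinarith
  nlinarith

end Main

section Mem

variable {n : ℕ} {R ε : ℝ}

lemma mem_ne_zero (hn : 4 ≤ n) (hR : 0 < R) (hε₂ : ε < R * Real.sin (2 * π / n))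
    {x : EuclideanSpace ℝ (Fin 2)} (hx : x ∈ ⋃ k : Fin n, closedBall (circPoint n R k) ε) :
    x ≠ 0 := by
  obtain ⟨k, hk⟩ := Set.mem_iUnion.1 hx
  intro h
  rw [h, mem_closedBall, dist_comm, dist_zero_right, norm_circPoint n R hR.le] at hk
  exact absurd hk (not_le.2 (eps_lt_R n R ε hR hε₂))

lemma memA (hn : 4 ≤ n) (hR : 0 < R)
    (hε₁ : R * Real.sin (π / n) ≤ ε) (hε₂ : ε < R * Real.sin (2 * π / n))
    {x : EuclideanSpace ℝ (Fin 2)} (hx : x ∈ ⋃ k : Fin n, closedBall (circPoint n R k) ε)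
    {c : ℝ} (hc1 : min (R * Real.cos (π / n) * ‖x‖⁻¹) 1 ≤ c)
    (hc2 : c ≤ max (R * Real.cos (π / n) * ‖x‖⁻¹) 1) :
    c • x ∈ ⋃ k : Fin n, closedBall (circPoint n R k) ε := by
  obtain ⟨k, hk⟩ := Set.mem_iUnion.1 hx
  have hx0 : x ≠ 0 := mem_ne_zero hn hR hε₂ hx
  have hρ : (0:ℝ) < ‖x‖ := norm_pos_iff.mpr hx0
  set r₀ := R * Real.cos (π / n) with hr₀def
  have hr₀ : 0 < r₀ := mul_pos hR (cos_pos_n n hn)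
  obtain ⟨j, -, hjmax⟩ := Finset.exists_max_image Finset.univ
    (fun j : Fin n => (inner ℝ x (circPoint n R j) : ℝ)) ⟨k, Finset.mem_univ k⟩
  obtain ⟨j₀, hj₀⟩ := key n (by omega) R hR.le x hx0
  set A := (inner ℝ x (circPoint n R j) : ℝ) with hA
  have hA1 : ‖x‖ * r₀ ≤ A := le_trans hj₀ (hjmax j₀ (Finset.mem_univ _))
  have hA2 : (inner ℝ x (circPoint n R k) : ℝ) ≤ A := hjmax k (Finset.mem_univ _)
  refine Set.mem_iUnion.2 ⟨j, ?_⟩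
  rw [mem_closedBall, dist_eq_norm]
  apply le_of_sq_le_sq' _ _ (norm_nonneg _) (eps_pos n R ε hn hR hε₁).le
  rw [norm_sub_sq_real, real_inner_smul_left, norm_circPoint n R hR.le, norm_smul]
  set ρ := ‖x‖
  set b := A / ρ with hb
  have hAb : A = ρ * b := by rw [hb]; field_simp
  have hbr : r₀ ≤ b := by rw [hb, le_div_iff₀ hρ]; nlinarith
  have hgap := gap_bound n R ε hn hR hε₁
  have h1 : r₀^2 - 2*r₀*b + R^2 ≤ ε^2 := by nlinarith
  have h2 : ρ^2 - 2*ρ*b + R^2 ≤ ε^2 := by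
    have hdist : ‖x - circPoint n R k‖ ≤ ε := by
      rw [← dist_eq_norm]; exact hk
    have := mul_self_le_mul_self (norm_nonneg (x - circPoint n R k)) hdist
    have hexp := norm_sub_sq_real x (circPoint n R k)
    rw [norm_circPoint n R hR.le] at hexp
    nlinarith
  have e1 : r₀ * ρ⁻¹ * ρ = r₀ := by field_simp
  have hmin : min r₀ ρ ≤ c * ρ := by
    have h := mul_le_mul_of_nonneg_right hc1 hρ.le
    rwa [min_mul_of_nonneg _ _ hρ.le, e1, one_mul] at h
  have hmax : c * ρ ≤ max r₀ ρ := by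
    have h := mul_le_mul_of_nonneg_right hc2 hρ.le
    rwa [max_mul_of_nonneg _ _ hρ.le, e1, one_mul] at h
  have hq := quad_bound b R ε r₀ ρ (c * ρ) h1 h2 hmin hmax
  have habs : (‖c‖ * ρ)^2 = (c * ρ)^2 := by
    rw [Real.norm_eq_abs]; rw [mul_pow, mul_pow, sq_abs]
  have hcA : c * A = (c * ρ) * b := by rw [hAb]; ring
  rw [← hA]
  linarith [hq, habs, hcA]

lemma gmem (hn : 4 ≤ n) (hR : 0 < R)
    (hε₁ : R * Real.sin (π / n) ≤ ε)
    {x : EuclideanSpace ℝ (Fin 2)} (hx : ‖x‖ = R) :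
    (R * Real.cos (π / n) / R) • x ∈ ⋃ k : Fin n, closedBall (circPoint n R k) ε := by
  set r₀ := R * Real.cos (π / n) with hr₀def
  have hr₀ : 0 < r₀ := mul_pos hR (cos_pos_n n hn)
  have hx0 : x ≠ 0 := by intro h; rw [h, norm_zero] at hx; exact absurd hx.symm hR.ne'
  obtain ⟨j, hj⟩ := key n (by omega) R hR.le x hx0
  rw [hx] at hj
  refine Set.mem_iUnion.2 ⟨j, ?_⟩
  rw [mem_closedBall, dist_eq_norm]
  apply le_of_sq_le_sq' _ _ (norm_nonneg _) (eps_pos n R ε hn hR hε₁).le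
  rw [norm_sub_sq_real, real_inner_smul_left, norm_circPoint n R hR.le, norm_smul, hx,
    Real.norm_eq_abs, abs_of_pos (by positivity : (0:ℝ) < r₀ / R)]
  have hgap := gap_bound n R ε hn hR hε₁
  rw [← hr₀def] at hgap hj
  have h4 : r₀ / R * R = r₀ := by field_simp
  have h5 : r₀ / R * (R * r₀) = r₀ * r₀ := by field_simp
  have h6 := mul_le_mul_of_nonneg_left hj (le_of_lt (div_pos hr₀ hR))
  rw [h4]
  nlinarith [h6, h5, hgap]

lemma comb_bounds (a t : ℝ) (h0 : 0 ≤ t) (h1 : t ≤ 1) :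
    min a 1 ≤ (1 - t) * a + t ∧ (1 - t) * a + t ≤ max a 1 := by
  rcases le_total a 1 with h | h
  · rw [min_eq_left h, max_eq_right h]
    constructor <;> nlinarith
  · rw [min_eq_right h, max_eq_left h]
    constructor <;> nlinarith

end Mem

theorem stmt_10 (n : ℕ) (hn : 4 ≤ n) (R : ℝ) (hR : 0 < R) (ε : ℝ)
    (hε₁ : R * Real.sin (π / n) ≤ ε) (hε₂ : ε < R * Real.sin (2 * π / n)) :
    Nonempty (ContinuousMap.HomotopyEquiv
      (↥(⋃ k : Fin n, closedBall (circPoint n R k) ε))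
      (↥({x : EuclideanSpace ℝ (Fin 2) | ‖x‖ = R}))) := by
  set E := EuclideanSpace ℝ (Fin 2)
  set U : Set E := ⋃ k : Fin n, closedBall (circPoint n R k) ε with hU
  set S : Set E := {x : E | ‖x‖ = R} with hS
  set r₀ : ℝ := R * Real.cos (π / n) with hr₀def
  have hr₀ : 0 < r₀ := mul_pos hR (cos_pos_n n hn)
  have hUne : ∀ x : U, (x : E) ≠ 0 := fun x => mem_ne_zero hn hR hε₂ x.2
  have hUnorm : ∀ x : U, (0:ℝ) < ‖(x : E)‖ := fun x => norm_pos_iff.mpr (hUne x)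
  -- the forward map
  have hfmem : ∀ x : U, (R * ‖(x : E)‖⁻¹) • (x : E) ∈ S := by
    intro x
    have h := hUnorm x
    simp only [hS, Set.mem_setOf_eq, norm_smul, Real.norm_eq_abs]
    rw [abs_of_pos (by positivity)]
    field_simp
  have hfc : Continuous fun x : U => (R * ‖(x : E)‖⁻¹) • (x : E) := by
    apply Continuous.fun_smul
    · exact continuous_const.mul ((continuous_norm.comp continuous_subtype_val).inv₀
        (fun x => (hUnorm x).ne'))
    · exact continuous_subtype_val
  let f : C(U, S) := ⟨fun x => ⟨(R * ‖(x : E)‖⁻¹) • (x : E), hfmem x⟩,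
    hfc.subtype_mk _⟩
  -- the backward map
  let g : C(S, U) := ⟨fun x => ⟨(r₀ / R) • (x : E), gmem hn hR hε₁ x.2⟩,
    ((continuous_const.fun_smul continuous_subtype_val).subtype_mk _)⟩
  -- right inverse : f ∘ g = id on S
  have hright : f.comp g = ContinuousMap.id S := by
    ext x
    simp only [ContinuousMap.comp_apply, ContinuousMap.coe_mk, ContinuousMap.id_apply, f, g]
    have hxR : ‖(x : E)‖ = R := x.2
    rw [norm_smul, Real.norm_eq_abs, abs_of_pos (by positivity : (0:ℝ) < r₀ / R), hxR,
      smul_smul]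
    have : R * (r₀ / R * R)⁻¹ * (r₀ / R) = 1 := by field_simp
    rw [this, one_smul]
  -- the homotopy from g ∘ f to id on U
  have hHmem : ∀ (t : unitInterval) (x : U),
      ((1 - (t : ℝ)) * (r₀ * ‖(x : E)‖⁻¹) + (t : ℝ)) • (x : E) ∈ U := by
    intro t x
    have hcb := comb_bounds (r₀ * ‖(x : E)‖⁻¹) (t : ℝ) t.2.1 t.2.2
    exact memA hn hR hε₁ hε₂ x.2 hcb.1 hcb.2
  have hHc : Continuous fun p : unitInterval × U =>
      ((1 - (p.1 : ℝ)) * (r₀ * ‖(p.2 : E)‖⁻¹) + (p.1 : ℝ)) • (p.2 : E) := by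
    have ht : Continuous fun p : unitInterval × U => (p.1 : ℝ) :=
      continuous_subtype_val.comp continuous_fst
    have hx : Continuous fun p : unitInterval × U => (p.2 : E) :=
      continuous_subtype_val.comp continuous_snd
    have hninv : Continuous fun p : unitInterval × U => (‖(p.2 : E)‖)⁻¹ :=
      (hx.norm).inv₀ (fun p => (hUnorm p.2).ne')
    exact (((continuous_const.sub ht).mul (continuous_const.mul hninv)).add ht).fun_smul hx
  have hleft : (g.comp f).Homotopic (ContinuousMap.id U) := by
    refine ⟨?_⟩
    refine ContinuousMap.Homotopy.mk
      ⟨fun p => ⟨((1 - (p.1 : ℝ)) * (r₀ * ‖(p.2 : E)‖⁻¹) + (p.1 : ℝ)) • (p.2 : E),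
        hHmem p.1 p.2⟩, hHc.subtype_mk _⟩ ?_ ?_
    · intro x
      apply Subtype.ext
      simp only [ContinuousMap.coe_mk, ContinuousMap.comp_apply, f, g]
      rw [smul_smul]
      norm_num
      congr 1
      have := (hUnorm x).ne'
      field_simp
    · intro x
      apply Subtype.ext
      simp only [ContinuousMap.coe_mk, ContinuousMap.id_apply]
      norm_num
  exact ⟨ContinuousMap.HomotopyEquiv.mk f g hleft (hright ▸ ContinuousMap.Homotopic.refl (ContinuousMap.id S))⟩
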